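/- arXiv:2110.14542 — 3 statements merged into one kernel-verified Lean document; each statement's English description precedes it below -/
import Mathlib

section
/- If F > T_a, the steady-state solution U^S is strictly decreasing on [0, L], and satisfies T_a < U^S(x) ≤ F for all x in [0, L]. -/
/-!
Write `U^S(x) = F - Qμ R(x)`, where `R` is the thermal resistance of the slab between `0` and `x`.
`R` is continuous and piecewise linear with positive slopes `1/k₁`, `1/k₂`, hence strictly increasing
with `R 0 = 0`; so `U^S` is strictly decreasing with `U^S(0) = F`. The denominator of `μ` is
`k₁k₂ (1 + h R(L))`, so `μ = 1 / (1 + h R(L))` and `U^S(L) - T_a = (F - T_a)(1 - h μ R(L)) = (F - T_a) μ > 0`;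
monotonicity carries this bound to all of `[0, L]`.
-/

open Set

/-- The resistance `∫₀ˣ dy / k(y)` of the slab with conductivity `k₁` on `[0, l]` and `k₂` beyond. -/
noncomputable def slabResistance (k₁ k₂ l x : ℝ) : ℝ :=
  if x ≤ l then x / k₁ else (x - l) / k₂ + l / k₁

section slabResistance

variable {k₁ k₂ l : ℝ}

theorem slabResistance_of_le {x : ℝ} (hx : x ≤ l) : slabResistance k₁ k₂ l x = x / k₁ :=
  if_pos hx

theorem slabResistance_of_ge {x : ℝ} (hx : l ≤ x) :
    slabResistance k₁ k₂ l x = (x - l) / k₂ + l / k₁ := by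
  rcases hx.eq_or_lt with rfl | hlt
  · simp [slabResistance]
  · exact if_neg hlt.not_ge

theorem strictMono_slabResistance (hk₁ : 0 < k₁) (hk₂ : 0 < k₂) :
    StrictMono (slabResistance k₁ k₂ l) := by
  have hleft : StrictMonoOn (slabResistance k₁ k₂ l) (Iic l) := fun x hx y hy hxy => by
    rw [slabResistance_of_le hx, slabResistance_of_le hy]
    gcongr
  have hright : StrictMonoOn (slabResistance k₁ k₂ l) (Ici l) := fun x hx y hy hxy => by
    rw [slabResistance_of_ge hx, slabResistance_of_ge hy]
    gcongr
  rw [← strictMonoOn_univ, ← Iic_union_Ici (a := l)]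
  exact hleft.union hright isGreatest_Iic isLeast_Ici

end slabResistance

theorem div_slabDenominator_eq_inv {k₁ k₂ h l L : ℝ} (hk₁ : k₁ ≠ 0) (hk₂ : k₂ ≠ 0) :
    k₁ * k₂ / (k₁ * k₂ + k₁ * h * L + (k₂ - k₁) * h * l)
      = (1 + h * ((L - l) / k₂ + l / k₁))⁻¹ := by
  rw [← inv_div]
  congr 1
  field_simp
  ring

theorem stmt_5_general (k₁ k₂ h l L Ta F : ℝ)
    (hk₁ : 0 < k₁) (hk₂ : 0 < k₂) (hh : 0 < h) (hl : 0 < l) (hlL : l < L)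
    (hF : Ta < F)
    (Q μ : ℝ) (hQ : Q = (F - Ta) * h)
    (hμ : μ = k₁ * k₂ / (k₁ * k₂ + k₁ * h * L + (k₂ - k₁) * h * l))
    (Us : ℝ → ℝ)
    (hUs : Us = fun x => if x ≤ l then F - Q * μ * x / k₁
                          else F - Q * μ * ((x - l) / k₂ + l / k₁)) :
    StrictAntiOn Us (Set.Icc 0 L) ∧
    ∀ x ∈ Set.Icc 0 L, Ta < Us x ∧ Us x ≤ F := by
  set R := slabResistance k₁ k₂ l
  have hUsR : Us = fun x => F - Q * μ * R x := by
    subst hUs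
    funext x
    simp only [R, slabResistance]
    split_ifs <;> ring
  have hR : StrictMono R := strictMono_slabResistance hk₁ hk₂
  have hR0 : R 0 = 0 := by simp [R, slabResistance_of_le hl.le]
  have hRL : 0 < 1 + h * R L := by
    have : 0 < R L := hR0 ▸ hR (hl.trans hlL)
    positivity
  have hμR : μ = (1 + h * R L)⁻¹ := by
    rw [hμ, div_slabDenominator_eq_inv hk₁.ne' hk₂.ne', ← slabResistance_of_ge hlL.le]
  have hμpos : 0 < μ := hμR ▸ inv_pos.mpr hRL
  have hUsL : Us L - Ta = (F - Ta) * μ := by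
    have hμmul : μ * (1 + h * R L) = 1 := hμR ▸ inv_mul_cancel₀ hRL.ne'
    rw [hUsR, hQ]
    linear_combination (Ta - F) * hμmul
  have hQμ : 0 < Q * μ := mul_pos (hQ ▸ mul_pos (sub_pos.mpr hF) hh) hμpos
  have hanti : StrictAnti Us := hUsR ▸ fun x y hxy => sub_lt_sub_left (hR.const_mul hQμ hxy) F
  refine ⟨hanti.strictAntiOn _, fun x ⟨hx0, hxL⟩ => ⟨?_, ?_⟩⟩
  · linarith [hanti.antitone hxL, mul_pos (sub_pos.mpr hF) hμpos]
  · simpa only [hUsR, hR0, mul_zero, sub_zero] using hanti.antitone hx0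

theorem stmt_5 (k₁ k₂ h l L Ta F : ℝ)
    (hk₁ : 0 < k₁) (hk₂ : 0 < k₂) (hh : 0 < h) (hl : 0 < l) (hlL : l < L)
    (hTa : 0 < Ta) (hF : Ta < F)
    (Q μ : ℝ) (hQ : Q = (F - Ta) * h)
    (hμ : μ = k₁ * k₂ / (k₁ * k₂ + k₁ * h * L + (k₂ - k₁) * h * l))
    (Us : ℝ → ℝ)
    (hUs : Us = fun x => if x ≤ l then F - Q * μ * x / k₁
                          else F - Q * μ * ((x - l) / k₂ + l / k₁)) :
    StrictAntiOn Us (Set.Icc 0 L) ∧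
    ∀ x ∈ Set.Icc 0 L, Ta < Us x ∧ Us x ≤ F :=
  stmt_5_general k₁ k₂ h l L Ta F hk₁ hk₂ hh hl hlL hF Q μ hQ hμ Us hUs
end

section
/- For α, l, L, k > 0 with L > l, the image of the function f(x) = arctan(tan(αlx)/(kα)) + (L - l)x, defined on D = [0, ∞) \ {(2n-1)π/(2αl) : n ∈ ℕ}, contains all positive real numbers: for every y > 0 there exists x ∈ D with f(x) = y. -/
open Real Set Filter Topology

theorem stmt_9 (α l L k : ℝ)
    (hα : 0 < α) (hl : 0 < l) (hk : 0 < k) (hlL : l < L)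
    (f : ℝ → ℝ)
    (hf : f = fun x => Real.arctan (Real.tan (α * l * x) / (k * α)) + (L - l) * x)
    (D : Set ℝ)
    (hD : D = Set.Ici 0 \ {x : ℝ | ∃ n : ℕ, x = (2 * (n : ℝ) - 1) * π / (2 * α * l)}) :
    ∀ y : ℝ, 0 < y → ∃ x ∈ D, f x = y := by
  classical
  intro y hy
  have ha : 0 < α * l := mul_pos hα hl
  have hb : 0 < L - l := sub_pos.2 hlL
  have hπ := Real.pi_pos
  have hka : 0 < k * α := mul_pos hk hα
  set p : ℕ → ℝ := fun n => (2 * (n : ℝ) - 1) * π / (2 * (α * l)) with hp'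
  have hpmono : StrictMono p := by
    intro m n h
    have hmn : (m : ℝ) < n := by exact_mod_cast h
    apply (div_lt_div_iff_of_pos_right (by positivity)).mpr
    nlinarith
  have hap : ∀ n : ℕ, α * l * p (n + 1) = π / 2 + n * π := by
    intro n
    simp only [hp']
    push_cast
    field_simp
    ring
  have hgap : ∀ n : ℕ, p (n + 1) - p n = π / (α * l) := by
    intro n
    simp only [hp']
    push_cast
    field_simp
    ring
  have hhalf : π / (2 * (α * l)) < π / (α * l) :=
    div_lt_div_of_pos_left hπ ha (by linarith)
  have hppos : ∀ n : ℕ, 0 < p (n + 1) := by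
    intro n
    simp only [hp']
    have h1 : (0:ℝ) < 2 * ((n:ℝ) + 1) - 1 := by
      have : (0:ℝ) ≤ (n:ℝ) := Nat.cast_nonneg n
      linarith
    push_cast
    positivity
  -- choose the branch index N
  have hex : ∃ n : ℕ, y < π / 2 + (L - l) * p (n + 1) := by
    obtain ⟨n, hn⟩ := exists_nat_gt (y * (2 * (α * l)) / ((L - l) * π))
    refine ⟨n, ?_⟩
    rw [div_lt_iff₀ (by positivity)] at hn
    have hP : y < (L - l) * p (n + 1) := by
      simp only [hp']
      rw [← mul_div_assoc, lt_div_iff₀ (by positivity)]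
      have hn0 : (0:ℝ) ≤ (n:ℝ) := Nat.cast_nonneg n
      push_cast
      nlinarith
    linarith
  set N := Nat.find hex with hN'
  have hNy : y < π / 2 + (L - l) * p (N + 1) := Nat.find_spec hex
  have hNmin : ∀ m, m < N → ¬ (y < π / 2 + (L - l) * p (m + 1)) :=
    fun m hm => Nat.find_min hex hm
  -- continuity on the branch
  have hcont : ∀ x ∈ Ioo (p N) (p (N + 1)), ContinuousAt f x := by
    intro x hx
    have hcos : Real.cos (α * l * x) ≠ 0 := by
      intro hc
      rw [Real.cos_eq_zero_iff] at hc
      obtain ⟨j, hj⟩ := hc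
      have h1 : p N < x := hx.1
      have h2 : x < p (N + 1) := hx.2
      simp only [hp'] at h1 h2
      rw [div_lt_iff₀ (by positivity)] at h1
      rw [lt_div_iff₀ (by positivity)] at h2
      have hx2 : x * (2 * (α * l)) = (2 * (j : ℝ) + 1) * π := by
        rw [show x * (2 * (α * l)) = 2 * (α * l * x) by ring, hj]
        ring
      rw [hx2] at h1 h2
      push_cast at h1 h2
      have e1 : 2 * (N : ℝ) - 1 < 2 * (j : ℝ) + 1 := by nlinarith
      have e2 : 2 * (j : ℝ) + 1 < 2 * (N : ℝ) + 1 := by nlinarith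
      have i1 : 2 * (N : ℤ) - 1 < 2 * j + 1 := by exact_mod_cast e1
      have i2 : 2 * (j : ℤ) + 1 < 2 * N + 1 := by exact_mod_cast e2
      omega
    rw [hf]
    refine ContinuousAt.add ?_ (by fun_prop)
    exact Real.continuous_arctan.continuousAt.comp
      (((Real.continuousAt_tan.2 hcos).comp (by fun_prop)).div_const _)
  -- the arctan chain tendsto
  have Tchain : Tendsto (fun δ : ℝ => Real.arctan (Real.tan (π / 2 - α * l * δ) / (k * α)))
      (𝓝[>] (0:ℝ)) (𝓝 (π / 2)) := by
    have T1 : Tendsto (fun δ : ℝ => π / 2 - α * l * δ) (𝓝[>] (0:ℝ)) (𝓝[<] (π / 2)) := by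
      apply tendsto_nhdsWithin_of_tendsto_nhds_of_eventually_within
      · have : Tendsto (fun δ : ℝ => π / 2 - α * l * δ) (𝓝 0) (𝓝 (π / 2 - α * l * 0)) :=
          (continuous_const.sub (continuous_const.mul continuous_id)).tendsto 0
        simpa using this.mono_left nhdsWithin_le_nhds
      · filter_upwards [self_mem_nhdsWithin] with δ hδ
        have hδ0 : (0:ℝ) < δ := hδ
        have : 0 < α * l * δ := by positivity
        simp only [mem_Iio]
        linarith
    have T2 := Real.tendsto_tan_pi_div_two.comp T1
    have T3 : Tendsto (fun δ : ℝ => Real.tan (π / 2 - α * l * δ) / (k * α))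
        (𝓝[>] (0:ℝ)) atTop := T2.atTop_div_const hka
    exact (Real.tendsto_arctan_atTop.mono_right nhdsWithin_le_nhds).comp T3
  have hIoo : Ioo (0:ℝ) (π / (2 * (α * l))) ∈ 𝓝[>] (0:ℝ) :=
    Ioo_mem_nhdsGT_of_mem ⟨le_refl 0, by positivity⟩
  -- right witness v
  have hTright : Tendsto (fun δ : ℝ => f (p (N + 1) - δ)) (𝓝[>] (0:ℝ))
      (𝓝 (π / 2 + (L - l) * p (N + 1))) := by
    have heq : ∀ δ : ℝ, f (p (N + 1) - δ) =
        Real.arctan (Real.tan (π / 2 - α * l * δ) / (k * α)) + (L - l) * (p (N + 1) - δ) := by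
      intro δ
      rw [hf]
      simp only
      rw [show α * l * (p (N + 1) - δ) = (π / 2 - α * l * δ) + N * π by
            rw [mul_sub, hap]; ring, Real.tan_add_nat_mul_pi]
    simp only [heq]
    refine Tchain.add ?_
    have : Tendsto (fun δ : ℝ => (L - l) * (p (N + 1) - δ)) (𝓝 0)
        (𝓝 ((L - l) * (p (N + 1) - 0))) :=
      (continuous_const.mul (continuous_const.sub continuous_id)).tendsto 0
    simpa using this.mono_left nhdsWithin_le_nhds
  have hev1 : ∀ᶠ δ in 𝓝[>] (0:ℝ), y < f (p (N + 1) - δ) :=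
    hTright.eventually (eventually_gt_nhds hNy)
  obtain ⟨δv, hδvy, hδv0, hδvlt⟩ :
      ∃ δ : ℝ, y < f (p (N + 1) - δ) ∧ 0 < δ ∧ δ < π / (2 * (α * l)) := by
    obtain ⟨δ, h1, h2⟩ := (hev1.and (eventually_of_mem hIoo fun _ h => h)).exists
    exact ⟨δ, h1, h2.1, h2.2⟩
  set v := p (N + 1) - δv with hv'
  have hvIoo : v ∈ Ioo (p N) (p (N + 1)) := by
    constructor
    · have := hgap N
      simp only [hv']
      linarith
    · simp only [hv']; linarith
  have hv0 : 0 ≤ v := by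
    have hge : π / (2 * (α * l)) ≤ p (N + 1) := by
      simp only [hp']
      apply (div_le_div_iff_of_pos_right (by positivity)).mpr
      have : (0:ℝ) ≤ (N:ℝ) := Nat.cast_nonneg N
      push_cast
      nlinarith
    simp only [hv']
    linarith
  have hfv : y < f v := hδvy
  -- left witness u
  obtain ⟨u, huIoo, hu0, hfu⟩ :
      ∃ u, u ∈ Ioo (p N) (p (N + 1)) ∧ 0 ≤ u ∧ f u ≤ y := by
    rcases Nat.eq_zero_or_pos N with h0 | hposN
    · refine ⟨0, ?_, le_refl 0, ?_⟩
      · rw [h0]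
        constructor
        · show p 0 < 0
          have hp0 : p 0 = -(π / (2 * (α * l))) := by
            simp only [hp']
            push_cast
            ring
          rw [hp0, neg_lt_zero]
          positivity
        · exact hppos 0
      · rw [hf]
        simp [Real.arctan_zero, Real.tan_zero]
        linarith
    · -- N ≥ 1
      obtain ⟨M, hM⟩ : ∃ M, N = M + 1 := ⟨N - 1, by omega⟩
      have hNlow : π / 2 + (L - l) * p N ≤ y := by
        have := hNmin M (by omega)
        rw [← hM] at this
        linarith [not_lt.mp this]
      have hTleft : Tendsto (fun δ : ℝ => f (p N + δ)) (𝓝[>] (0:ℝ))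
          (𝓝 (-(π / 2) + (L - l) * p N)) := by
        have heq : ∀ δ : ℝ, f (p N + δ) =
            -(Real.arctan (Real.tan (π / 2 - α * l * δ) / (k * α))) + (L - l) * (p N + δ) := by
          intro δ
          rw [hf]
          simp only
          rw [show α * l * (p N + δ) = -(π / 2 - α * l * δ) + N * π by
                rw [mul_add, hM, hap]; push_cast; ring, Real.tan_add_nat_mul_pi, Real.tan_neg,
              neg_div, Real.arctan_neg]
        simp only [heq]
        refine (Tchain.neg).add ?_
        have : Tendsto (fun δ : ℝ => (L - l) * (p N + δ)) (𝓝 0)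
            (𝓝 ((L - l) * (p N + 0))) :=
          (continuous_const.mul (continuous_const.add continuous_id)).tendsto 0
        simpa using this.mono_left nhdsWithin_le_nhds
      have hev2 : ∀ᶠ δ in 𝓝[>] (0:ℝ), f (p N + δ) < y := by
        apply hTleft.eventually (eventually_lt_nhds (by linarith))
      obtain ⟨δ, h1, h2⟩ := (hev2.and (eventually_of_mem hIoo fun _ h => h)).exists
      refine ⟨p N + δ, ⟨by linarith [h2.1], ?_⟩, ?_, le_of_lt h1⟩
      · have := hgap N
        linarith [h2.2]
      · have hpN : 0 < p N := by
          rw [hM]; exact hppos M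
        linarith [h2.1]
  -- intermediate value theorem
  have hsub : uIcc u v ⊆ Ioo (p N) (p (N + 1)) :=
    ordConnected_Ioo.uIcc_subset huIoo hvIoo
  have hcontOn : ContinuousOn f (uIcc u v) := fun x hx =>
    (hcont x (hsub hx)).continuousWithinAt
  have hmem : y ∈ uIcc (f u) (f v) := by
    rw [Set.mem_uIcc]
    exact Or.inl ⟨hfu, le_of_lt hfv⟩
  obtain ⟨x, hxmem, hxeq⟩ := intermediate_value_uIcc hcontOn hmem
  refine ⟨x, ?_, hxeq⟩
  rw [hD]
  have hxIoo : x ∈ Ioo (p N) (p (N + 1)) := hsub hxmem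
  constructor
  · rw [Set.mem_uIcc] at hxmem
    rcases hxmem with ⟨h1, _⟩ | ⟨h1, _⟩
    · exact le_trans hu0 h1
    · exact le_trans hv0 h1
  · rintro ⟨m, hm⟩
    have hxm : x = p m := by
      simp only [hp']
      rw [hm]
      ring_nf
    rcases lt_or_ge m (N + 1) with hmN | hmN
    · have hle : p m ≤ p N := hpmono.monotone (by omega)
      rw [hxm] at hxIoo
      linarith [hxIoo.1]
    · have hle : p (N + 1) ≤ p m := hpmono.monotone hmN
      rw [hxm] at hxIoo
      linarith [hxIoo.2]
end

section
/- For positive constants k₂, h, α, l, L, k with L > l, the eigenvalue equation -（k₂/h)x = (tan(αlx) + kα tan((L-l)x))/(kα - tan(αlx)tan((L-l)x)) has infinitely many positive solutions; that is, the set of x > 0 satisfying the equation (where both sides are defined) is infinite. -/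
/-!
Write `u = αl`, `v = L - l`, `m = kα`, `c = k₂/h`. Clearing denominators turns the equation into
a zero of the continuous function `secular u v m c`, which changes sign on
`[2nπ/(u+v), (2n+1)π/(u+v)]` for every large `n`; this gives zeros `zₙ → ∞` with bounded gaps.
Such a zero solves the equation unless `cos (u zₙ) = 0` or `cos (v zₙ) = 0`. At these spurious
zeros one of `u zₙ`, `v zₙ` is `π/2` and the other a small positive arctan modulo `π`, so with
`Aₙ`, `Bₙ` the integer parts of `u zₙ / π`, `v zₙ / π` the defect `π (u Bₙ - v Aₙ) - gₙ`,
`gₙ ∈ {vπ/2, -uπ/2}`, is nonzero and tends to `0`. Since `Aₙ` and `Bₙ` move by at most `3` between consecutive zeros, its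
increments lie in a finite set, so it would be eventually constant, hence eventually `0`.
-/

open Real Set Filter Topology

theorem eventually_eq_zero_of_tendsto_of_sub_mem {f : ℕ → ℝ} {S : Set ℝ} (hS : S.Finite)
    (hf : Tendsto f atTop (𝓝 0)) (hstep : ∀ n, f (n + 1) - f n ∈ S) :
    ∀ᶠ n in atTop, f n = 0 := by
  have hdiff : Tendsto (fun n => f (n + 1) - f n) atTop (𝓝 0) := by
    simpa using (hf.comp (tendsto_add_atTop_nat 1)).sub hf
  have hnhds : (S \ {0})ᶜ ∈ 𝓝 (0 : ℝ) :=
    hS.sdiff.isClosed.isOpen_compl.mem_nhds fun h => h.2 rfl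
  obtain ⟨N, hN⟩ := eventually_atTop.mp (hdiff hnhds)
  have hconst : ∀ n ≥ N, f n = f N := by
    intro n hn
    induction n, hn using Nat.le_induction with
    | base => rfl
    | succ n hn ih =>
      have hzero : f (n + 1) - f n = 0 := by
        by_contra hne
        exact hN n hn ⟨hstep n, hne⟩
      linarith
  have hlim : f N = 0 :=
    tendsto_nhds_unique (tendsto_const_nhds.congr' (eventually_atTop.mpr ⟨N, fun n hn =>
      (hconst n hn).symm⟩)) hf
  exact eventually_atTop.mpr ⟨N, fun n hn => (hconst n hn).trans hlim⟩

theorem exists_eq_int_mul_pi_add_arctan {y t : ℝ} (ht : 0 < t) (h : cos y = t * sin y) :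
    ∃ k : ℤ, y = k * π + arctan (1 / t) := by
  have hsin : sin (y - arctan (1 / t)) = 0 := by
    rw [sin_sub, sin_arctan, cos_arctan, h]
    field_simp
    ring
  obtain ⟨k, hk⟩ := sin_eq_zero_iff.mp hsin
  exact ⟨k, by linarith⟩

theorem tendsto_arctan_div_mul_atTop {a c : ℝ} (hc : 0 < c) :
    Tendsto (fun x => arctan (a / (c * x))) atTop (𝓝 0) := by
  have : Tendsto (fun x => a / (c * x)) atTop (𝓝 0) :=
    tendsto_const_nhds.div_atTop (tendsto_id.const_mul_atTop hc)
  simpa only [arctan_zero, Function.comp_def] using (continuous_arctan.tendsto 0).comp this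

theorem sub_mem_Icc_of_phase {w y y' : ℝ} {A A' : ℤ} (h : w * y - A * π ∈ Icc 0 (π / 2))
    (h' : w * y' - A' * π ∈ Icc 0 (π / 2)) (hgap : |w * (y' - y)| ≤ 3 * π) :
    A' - A ∈ Icc (-3 : ℤ) 3 := by
  have hπ := pi_pos
  rw [abs_le] at hgap
  have hlt : ((A' - A : ℤ) : ℝ) * π < 4 * π := by push_cast; linarith [h.1, h.2, h'.1, h'.2]
  have hgt : -4 * π < ((A' - A : ℤ) : ℝ) * π := by push_cast; linarith [h.1, h.2, h'.1, h'.2]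
  have h4 : A' - A < 4 := by exact_mod_cast lt_of_mul_lt_mul_right hlt hπ.le
  have h4' : -4 < A' - A := by exact_mod_cast lt_of_mul_lt_mul_right hgt hπ.le
  constructor <;> omega

/-- The difference of the two sides of the equation, multiplied by
`cos (u x) * cos (v x) * (m - tan (u x) * tan (v x))`. -/
noncomputable def secular (u v m c x : ℝ) : ℝ :=
  sin (u * x) * cos (v * x) + m * cos (u * x) * sin (v * x) +
    c * x * (m * cos (u * x) * cos (v * x) - sin (u * x) * sin (v * x))

theorem tan_equation_of_secular_eq_zero {u v m c x : ℝ} (hm : 0 < m) (hu : cos (u * x) ≠ 0)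
    (hv : cos (v * x) ≠ 0) (h : secular u v m c x = 0) :
    m - tan (u * x) * tan (v * x) ≠ 0 ∧
      -c * x = (tan (u * x) + m * tan (v * x)) / (m - tan (u * x) * tan (v * x)) := by
  have hfac : secular u v m c x = cos (u * x) * cos (v * x) *
      (tan (u * x) + m * tan (v * x) + c * x * (m - tan (u * x) * tan (v * x))) := by
    rw [secular, tan_eq_sin_div_cos, tan_eq_sin_div_cos]
    generalize u * x = a, v * x = b at hu hv ⊢
    field_simp
  have key : tan (u * x) + m * tan (v * x) + c * x * (m - tan (u * x) * tan (v * x)) = 0 := by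
    rwa [hfac, mul_eq_zero, or_iff_right (mul_ne_zero hu hv)] at h
  have hden : m - tan (u * x) * tan (v * x) ≠ 0 := by
    intro h0
    have ht : tan (u * x) = -m * tan (v * x) := by rw [h0] at key; linarith
    rw [ht] at h0
    nlinarith [sq_nonneg (tan (v * x))]
  refine ⟨hden, ?_⟩
  rw [eq_div_iff hden]
  linarith

theorem secular_of_add_mul_eq {u v m c x : ℝ} {k : ℕ} (hx : (u + v) * x = k * π) :
    secular u v m c x = (-1) ^ k * ((1 - m) * sin (u * x) * cos (u * x) +
      c * x * (m * cos (u * x) ^ 2 + sin (u * x) ^ 2)) := by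
  have hvx : v * x = k * π - u * x := by linarith
  rw [secular, hvx, cos_nat_mul_pi_sub, sin_nat_mul_pi_sub]
  ring

theorem one_sub_mul_add_mul_pos {m t s co : ℝ} (hm : 0 < m) (hsc : s ^ 2 + co ^ 2 = 1)
    (ht : 1 + m < t * min m 1) :
    0 < (1 - m) * s * co + t * (m * co ^ 2 + s ^ 2) := by
  have hmin0 : 0 < min m 1 := lt_min hm one_pos
  have hmin : min m 1 ≤ m * co ^ 2 + s ^ 2 := by
    rcases le_total m 1 with h | h
    · rw [min_eq_left h]; nlinarith [sq_nonneg s]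
    · rw [min_eq_right h]; nlinarith [sq_nonneg co]
  have ht0 : 0 < t := by
    by_contra! h
    nlinarith [mul_nonpos_of_nonpos_of_nonneg h hmin0.le]
  have hsc' : -(1 + m) ≤ (1 - m) * s * co := by
    nlinarith [sq_nonneg (s + co), mul_nonneg hm.le (sq_nonneg (s - co))]
  nlinarith [mul_le_mul_of_nonneg_left hmin ht0.le]

theorem exists_secular_zero_mem_Ioo {u v m c : ℝ} (hu : 0 < u) (hv : 0 < v) (hm : 0 < m)
    (hc : 0 < c) {n : ℕ} (hn : 1 + m < c * (2 * n * (π / (u + v))) * min m 1) :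
    ∃ z ∈ Ioo (2 * n * (π / (u + v))) ((2 * n + 1) * (π / (u + v))),
      secular u v m c z = 0 := by
  have huv : 0 < u + v := by linarith
  set a := 2 * n * (π / (u + v))
  set b := (2 * n + 1) * (π / (u + v))
  have hab : a < b := by simp only [a, b]; gcongr; linarith
  have ha : 0 < secular u v m c a := by
    have hk : (u + v) * a = ((2 * n : ℕ) : ℝ) * π := by
      push_cast; rw [mul_left_comm, mul_div_cancel₀ _ huv.ne']
    rw [secular_of_add_mul_eq hk, pow_mul, neg_one_sq, one_pow, one_mul]
    exact one_sub_mul_add_mul_pos hm (sin_sq_add_cos_sq _) hn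
  have hb : secular u v m c b < 0 := by
    have hk : (u + v) * b = ((2 * n + 1 : ℕ) : ℝ) * π := by
      push_cast; rw [mul_left_comm, mul_div_cancel₀ _ huv.ne']
    rw [secular_of_add_mul_eq hk, pow_succ, pow_mul, neg_one_sq, one_pow, one_mul, neg_one_mul,
      neg_neg_iff_pos]
    refine one_sub_mul_add_mul_pos hm (sin_sq_add_cos_sq _) (hn.trans_le ?_)
    gcongr
  have hcont : ContinuousOn (secular u v m c) (Icc a b) := by
    unfold secular; fun_prop
  exact intermediate_value_Ioo' hab.le hcont ⟨hb, ha⟩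

theorem exists_secular_zeros {u v m c : ℝ} (hu : 0 < u) (hv : 0 < v) (hm : 0 < m)
    (hc : 0 < c) (X : ℝ) : ∃ z : ℕ → ℝ, Tendsto z atTop atTop ∧
      ∀ n, X < z n ∧ secular u v m c (z n) = 0 ∧ |z (n + 1) - z n| ≤ 3 * (π / (u + v)) := by
  set d := π / (u + v)
  have hd : 0 < d := div_pos pi_pos (by linarith)
  obtain ⟨N, hN⟩ := exists_nat_gt (max X ((1 + m) / (c * min m 1)) / (2 * d))
  have hstart : ∀ n : ℕ, max X ((1 + m) / (c * min m 1)) < 2 * (n + N : ℕ) * d := by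
    intro n
    rw [div_lt_iff₀ (by positivity)] at hN
    push_cast
    nlinarith [n.cast_nonneg (α := ℝ)]
  have hzero : ∀ n : ℕ, ∃ z ∈ Ioo (2 * (n + N : ℕ) * d) ((2 * (n + N : ℕ) + 1) * d),
      secular u v m c z = 0 := by
    refine fun n => exists_secular_zero_mem_Ioo hu hv hm hc ?_
    have := (le_max_right _ _).trans_lt (hstart n)
    rw [div_lt_iff₀ (mul_pos hc (lt_min hm one_pos))] at this
    linarith
  choose z hz hsec using hzero
  refine ⟨z, ?_, fun n => ⟨?_, hsec n, ?_⟩⟩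
  · refine tendsto_atTop_mono (fun n => ?_)
      ((tendsto_natCast_atTop_atTop.atTop_mul_const (mul_pos two_pos hd)))
    have := (hz n).1
    push_cast at this
    nlinarith [N.cast_nonneg (α := ℝ)]
  · exact (le_max_left _ _).trans_lt ((hstart n).trans (hz n).1)
  · have h1 := hz n
    have h2 := hz (n + 1)
    push_cast at h1 h2
    rw [abs_le]
    constructor <;> linarith [h1.1, h1.2, h2.1, h2.2]

theorem exists_phases_of_secular_eq_zero_of_cos_left {u v m c x : ℝ} (hcx : 0 < c * x)
    (hx : secular u v m c x = 0) (hu : cos (u * x) = 0) :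
    ∃ A B : ℤ, u * x = A * π + π / 2 ∧ v * x = B * π + arctan (1 / (c * x)) := by
  obtain ⟨A, hA⟩ := cos_eq_zero_iff.mp hu
  have hsin : sin (u * x) ≠ 0 := by
    intro h0; simpa [h0, hu] using sin_sq_add_cos_sq (u * x)
  have hcot : cos (v * x) = c * x * sin (v * x) := by
    have : sin (u * x) * (cos (v * x) - c * x * sin (v * x)) = 0 := by
      rw [← hx, secular, hu]; ring
    linarith [(mul_eq_zero.mp this).resolve_left hsin]
  obtain ⟨B, hB⟩ := exists_eq_int_mul_pi_add_arctan hcx hcot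
  exact ⟨A, B, by rw [hA]; ring, hB⟩

theorem exists_phases_of_secular_eq_zero_of_cos_right {u v m c x : ℝ} (hm : 0 < m)
    (hcx : 0 < c * x) (hx : secular u v m c x = 0) (hv : cos (v * x) = 0) :
    ∃ A B : ℤ, u * x = A * π + arctan (m / (c * x)) ∧ v * x = B * π + π / 2 := by
  obtain ⟨B, hB⟩ := cos_eq_zero_iff.mp hv
  have hsin : sin (v * x) ≠ 0 := by
    intro h0; simpa [h0, hv] using sin_sq_add_cos_sq (v * x)
  have hcot : cos (u * x) = c * x / m * sin (u * x) := by
    have : sin (v * x) * (m * cos (u * x) - c * x * sin (u * x)) = 0 := by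
      rw [← hx, secular, hv]; ring
    have := (mul_eq_zero.mp this).resolve_left hsin
    field_simp
    linarith
  obtain ⟨A, hA⟩ := exists_eq_int_mul_pi_add_arctan (div_pos hcx hm) hcot
  exact ⟨A, B, by rwa [one_div_div] at hA, by rw [hB]; ring⟩

theorem exists_phase_defect_of_secular_eq_zero {u v m c x : ℝ} (hu : 0 < u) (hv : 0 < v)
    (hm : 0 < m) (hcx : 0 < c * x) (hx : secular u v m c x = 0)
    (hbad : cos (u * x) = 0 ∨ cos (v * x) = 0) :
    ∃ A B : ℤ, ∃ g ∈ ({v * (π / 2), -(u * (π / 2))} : Set ℝ),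
      u * x - A * π ∈ Icc 0 (π / 2) ∧ v * x - B * π ∈ Icc 0 (π / 2) ∧
      π * (u * B - v * A) - g ≠ 0 ∧
      |π * (u * B - v * A) - g| ≤ u * arctan (1 / (c * x)) + v * arctan (m / (c * x)) := by
  have h1 : 0 < arctan (1 / (c * x)) := arctan_pos.mpr (by positivity)
  have hm1 : 0 < arctan (m / (c * x)) := arctan_pos.mpr (by positivity)
  have h1' := arctan_lt_pi_div_two (1 / (c * x))
  have hm1' := arctan_lt_pi_div_two (m / (c * x))
  have hπ := pi_pos
  rcases hbad with hbad | hbad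
  · obtain ⟨A, B, hA, hB⟩ := exists_phases_of_secular_eq_zero_of_cos_left hcx hx hbad
    have hE : π * (u * B - v * A) - v * (π / 2) = -(u * arctan (1 / (c * x))) := by
      linear_combination v * hA - u * hB
    refine ⟨A, B, _, Or.inl rfl, ⟨by linarith, by linarith⟩, ⟨by linarith, by linarith⟩, ?_, ?_⟩
    · rw [hE, neg_ne_zero]; positivity
    · rw [hE, abs_neg, abs_of_pos (by positivity)]; nlinarith
  · obtain ⟨A, B, hA, hB⟩ := exists_phases_of_secular_eq_zero_of_cos_right hm hcx hx hbad
    have hE : π * (u * B - v * A) - -(u * (π / 2)) = v * arctan (m / (c * x)) := by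
      linear_combination v * hA - u * hB
    refine ⟨A, B, _, Or.inr rfl, ⟨by linarith, by linarith⟩, ⟨by linarith, by linarith⟩, ?_, ?_⟩
    · rw [hE]; positivity
    · rw [hE, abs_of_pos (by positivity)]; nlinarith

theorem not_tendsto_phase_defect {u v : ℝ} (hu : 0 < u) (hv : 0 < v) {z : ℕ → ℝ}
    {A B : ℕ → ℤ} {g : ℕ → ℝ} {G : Set ℝ} (hG : G.Finite) (hg : ∀ n, g n ∈ G)
    (hgap : ∀ n, |z (n + 1) - z n| ≤ 3 * (π / (u + v)))
    (hA : ∀ n, u * z n - A n * π ∈ Icc 0 (π / 2)) (hB : ∀ n, v * z n - B n * π ∈ Icc 0 (π / 2))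
    (hE0 : ∀ n, π * (u * B n - v * A n) - g n ≠ 0) :
    ¬Tendsto (fun n => π * (u * B n - v * A n) - g n) atTop (𝓝 0) := by
  intro hE
  have hscaled : ∀ w, 0 < w → w ≤ u + v → ∀ n, |w * (z (n + 1) - z n)| ≤ 3 * π := by
    intro w hw hwuv n
    rw [abs_mul, abs_of_pos hw]
    calc w * |z (n + 1) - z n| ≤ (u + v) * (3 * (π / (u + v))) :=
          mul_le_mul hwuv (hgap n) (abs_nonneg _) (by linarith)
      _ = 3 * π := by field_simp
  set S := (fun p : ℤ × ℤ × ℝ × ℝ => π * (u * p.2.1 - v * p.1) + p.2.2.1 - p.2.2.2) ''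
    (Icc (-3) 3 ×ˢ Icc (-3) 3 ×ˢ G ×ˢ G)
  have hS : S.Finite :=
    ((finite_Icc _ _).prod ((finite_Icc _ _).prod (hG.prod hG))).image _
  have hstep : ∀ n, (π * (u * B (n + 1) - v * A (n + 1)) - g (n + 1)) -
      (π * (u * B n - v * A n) - g n) ∈ S := by
    intro n
    refine ⟨(A (n + 1) - A n, B (n + 1) - B n, g n, g (n + 1)),
      ⟨sub_mem_Icc_of_phase (hA n) (hA (n + 1)) (hscaled u hu (by linarith) n),
        sub_mem_Icc_of_phase (hB n) (hB (n + 1)) (hscaled v hv (by linarith) n), hg n,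
        hg (n + 1)⟩, ?_⟩
    push_cast
    ring
  obtain ⟨n, hn⟩ := (eventually_eq_zero_of_tendsto_of_sub_mem hS hE hstep).exists
  exact hE0 n hn

theorem stmt_11 (k₂ h α l L k : ℝ)
    (hk₂ : 0 < k₂) (hh : 0 < h) (hα : 0 < α) (hl : 0 < l) (hk : 0 < k) (hlL : l < L) :
    {x : ℝ | 0 < x ∧ Real.cos (α * l * x) ≠ 0 ∧ Real.cos ((L - l) * x) ≠ 0 ∧
        k * α - Real.tan (α * l * x) * Real.tan ((L - l) * x) ≠ 0 ∧
        -(k₂ / h) * x =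
          (Real.tan (α * l * x) + k * α * Real.tan ((L - l) * x)) /
            (k * α - Real.tan (α * l * x) * Real.tan ((L - l) * x))}.Infinite := by
  have hu : 0 < α * l := by positivity
  have hv : 0 < L - l := sub_pos.mpr hlL
  have hm : 0 < k * α := by positivity
  have hc : 0 < k₂ / h := by positivity
  intro hfin
  obtain ⟨X, hX⟩ := hfin.bddAbove
  obtain ⟨z, hztop, hz⟩ := exists_secular_zeros hu hv hm hc (max X 0)
  have hzX n : X < z n := (le_max_left X 0).trans_lt (hz n).1
  have hz0 n : 0 < z n := (le_max_right X 0).trans_lt (hz n).1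
  have hcz n : 0 < k₂ / h * z n := mul_pos hc (hz0 n)
  have hbad n : cos (α * l * z n) = 0 ∨ cos ((L - l) * z n) = 0 := by
    by_contra! hgood
    obtain ⟨hden, heq⟩ := tan_equation_of_secular_eq_zero hm hgood.1 hgood.2 (hz n).2.1
    exact (hzX n).not_ge (hX ⟨hz0 n, hgood.1, hgood.2, hden, heq⟩)
  choose A B g hg hA hB hE0 hEle using fun n =>
    exists_phase_defect_of_secular_eq_zero hu hv hm (hcz n) (hz n).2.1 (hbad n)
  have hbound : Tendsto (fun n => α * l * arctan (1 / (k₂ / h * z n)) +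
      (L - l) * arctan (k * α / (k₂ / h * z n))) atTop (𝓝 0) := by
    simpa only [mul_zero, add_zero, Function.comp_def] using
      (((tendsto_arctan_div_mul_atTop hc).comp hztop).const_mul (α * l)).add
        (((tendsto_arctan_div_mul_atTop hc).comp hztop).const_mul (L - l))
  exact not_tendsto_phase_defect hu hv (toFinite _) hg (fun n => (hz n).2.2) hA hB hE0
    (squeeze_zero_norm (fun n => (Real.norm_eq_abs _).trans_le (hEle n)) hbound)
end
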